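/- (Lemma 4, Nakagami-m case.) Let m > 0, h̄ > 0, δ ∈ (0,1), and let f_N be the Gamma density with shape m and mean h̄, i.e. f_N(x) = (m/h̄)^m x^{m−1} e^{−m x/h̄}/Γ(m) on (0,∞). Then for every z > 0 with h̄ z < m (so that the Gauss hypergeometric series below converges), ∫₀^∞ ( (z x)^δ γ(1−δ, z x) − (1 − e^{−z x}) ) f_N(x) dx = (h̄ z/(1−δ)) · ₂F₁(m+1, 1−δ; 2−δ; −h̄ z/m) − ( 1 − (1 + h̄ z/m)^{−m} ). -/

import Mathlib

open Real MeasureTheory Set Filter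

/-- Pochhammer symbol `(a)_n = Γ(a+n)/Γ(a)`. -/
noncomputable def poch (a : ℝ) : ℕ → ℝ
  | 0 => 1
  | n + 1 => poch a n * (a + n)

/-- Gauss hypergeometric function `₂F₁(a, b; c; x) = Σ ((a)_n (b)_n/(c)_n) xⁿ/n!`. -/
noncomputable def hyp2F1 (a b c x : ℝ) : ℝ :=
  ∑' n : ℕ, (poch a n * poch b n / poch c n) * x ^ n / n.factorial

/-- Lower incomplete gamma function `γ(s, x) = ∫₀ˣ t^(s-1) e^(-t) dt`. -/
noncomputable def lowerGamma (s x : ℝ) : ℝ :=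
  ∫ t in Set.Ioc (0 : ℝ) x, t ^ (s - 1) * Real.exp (-t)

/-!
Write `s = 1 - δ` and `r = m / h̄`, so that `f_N` is the Gamma density of shape `m` and rate `r`.
Against `f_N`, the constant `1` integrates to `1` and `e^{-zx}` to the Laplace transform
`(1 + z/r)^{-m}`. For the incomplete gamma term, expanding `e^{-t}` and integrating termwise gives
`y^{1-s} γ(s, y) = Σ (-1)ⁿ y^{n+1} / (n! (s+n))`; integrating this termwise against `f_N` with the
Gamma moments `∫ xᵏ f_N = (m)ₖ / rᵏ`, and using `(m)_{n+1} = m (m+1)ₙ` and `(s)ₙ/(s+1)ₙ = s/(s+n)`,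
produces `(h̄z/s) ₂F₁(m+1, s; s+1; -z/r)`. Both interchanges of sum and integral are justified by
absolute convergence: the absolute values of the terms are those of the same hypergeometric series,
which converges because `z/r = h̄z/m < 1`.
-/

open scoped Nat ENNReal
open ProbabilityTheory

lemma poch_succ_left (a : ℝ) (n : ℕ) : poch a (n + 1) = a * poch (a + 1) n := by
  induction n with
  | zero => simp [poch]
  | succ n ih =>
    rw [poch, ih, poch]
    push_cast
    ring

lemma poch_eq_ascPochhammer_eval (a : ℝ) (n : ℕ) : poch a n = (ascPochhammer ℝ n).eval a := by
  induction n with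
  | zero => simp [poch]
  | succ n ih => rw [poch, ih, ascPochhammer_succ_eval]

lemma poch_pos {a : ℝ} (ha : 0 < a) (n : ℕ) : 0 < poch a n := by
  induction n with
  | zero => simp [poch]
  | succ n ih => exact mul_pos ih (by positivity)

lemma Gamma_add_nat_eq_poch_mul {a : ℝ} (ha : 0 < a) (n : ℕ) :
    Gamma (a + n) = poch a n * Gamma a := by
  induction n with
  | zero => simp [poch]
  | succ n ih =>
    rw [Nat.cast_succ, ← add_assoc, Gamma_add_one (by positivity), ih, poch]
    ring

lemma poch_div_poch_add_one {s : ℝ} (hs : 0 < s) (n : ℕ) :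
    poch s n / poch (s + 1) n = s / (s + n) := by
  have h := poch_succ_left s n
  rw [poch] at h
  have : 0 < poch (s + 1) n := poch_pos (by linarith) n
  rw [div_eq_div_iff this.ne' (by positivity)]
  linarith

noncomputable def hyp2F1Term (a b c x : ℝ) (n : ℕ) : ℝ :=
  poch a n * poch b n / poch c n * x ^ n / n !

lemma summable_norm_hyp2F1Term {a b c x : ℝ} (ha : 0 < a) (hb : 0 < b) (hc : 0 < c)
    (hx : |x| < 1) : Summable fun n => ‖hyp2F1Term a b c x n‖ := by
  have hradius : (ordinaryHypergeometricSeries ℝ a b c).radius = 1 :=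
    ordinaryHypergeometricSeries_radius_eq_one ℝ a b c fun k => by
      refine ⟨?_, ?_, ?_⟩ <;> · intro h; have := Nat.cast_nonneg (α := ℝ) k; linarith
  have hmem : x ∈ Metric.eball (0 : ℝ) (ordinaryHypergeometricSeries ℝ a b c).radius := by
    rw [hradius, mem_eball_zero_iff, ← ofReal_norm, Real.norm_eq_abs]
    exact ENNReal.ofReal_lt_one.mpr hx
  refine ((ordinaryHypergeometricSeries ℝ a b c).summable_norm_apply hmem).congr fun n => ?_
  rw [ordinaryHypergeometricSeries_apply_eq, hyp2F1Term, smul_eq_mul,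
    poch_eq_ascPochhammer_eval, poch_eq_ascPochhammer_eval, poch_eq_ascPochhammer_eval]
  ring_nf

lemma integral_norm_const_mul_of_nonneg {α : Type*} [MeasurableSpace α] {μ : Measure α}
    {g : α → ℝ} (c : ℝ) (hg : 0 ≤ᵐ[μ] g) :
    ∫ a, ‖c * g a‖ ∂μ = ‖∫ a, c * g a ∂μ‖ := by
  have hg' : ∀ᵐ a ∂μ, ‖c * g a‖ = |c| * g a :=
    hg.mono fun a ha => by rw [norm_mul, Real.norm_eq_abs, Real.norm_of_nonneg ha]
  rw [integral_congr_ae hg', integral_const_mul, integral_const_mul, norm_mul,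
    Real.norm_eq_abs, Real.norm_of_nonneg (integral_nonneg_of_ae hg)]

lemma integrable_of_hasSum_of_summable_integral_norm {α E : Type*} [MeasurableSpace α]
    {μ : Measure α} [NormedAddCommGroup E] {F : ℕ → α → E} {f : α → E}
    (hF_int : ∀ n, Integrable (F n) μ) (hF_sum : Summable fun n => ∫ a, ‖F n a‖ ∂μ)
    (hf : ∀ᵐ a ∂μ, HasSum (fun n => F n a) (f a)) : Integrable f μ := by
  refine ⟨aestronglyMeasurable_of_tendsto_ae atTop
    (fun n => Finset.aestronglyMeasurable_fun_sum (Finset.range n) fun i _ => (hF_int i).1)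
    (hf.mono fun a ha => ha.tendsto_sum_nat), ?_⟩
  have hbound : ∀ᵐ a ∂μ, ‖f a‖ₑ ≤ ∑' n, ‖F n a‖ₑ :=
    hf.mono fun a ha => ha.tsum_eq ▸ enorm_tsum_le_tsum_enorm
  calc ∫⁻ a, ‖f a‖ₑ ∂μ ≤ ∫⁻ a, ∑' n, ‖F n a‖ₑ ∂μ := lintegral_mono_ae hbound
    _ = ∑' n, ENNReal.ofReal (∫ a, ‖F n a‖ ∂μ) := by
      rw [lintegral_tsum fun n => (hF_int n).1.enorm]
      exact tsum_congr fun n => (ofReal_integral_norm_eq_lintegral_enorm (hF_int n)).symm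
    _ = ENNReal.ofReal (∑' n, ∫ a, ‖F n a‖ ∂μ) :=
      (ENNReal.ofReal_tsum_of_nonneg (fun n => integral_nonneg fun _ => norm_nonneg _) hF_sum).symm
    _ < ∞ := ENNReal.ofReal_lt_top

lemma hasSum_integral_of_hasSum_of_summable_integral_norm {α E : Type*} [MeasurableSpace α]
    {μ : Measure α} [NormedAddCommGroup E] [NormedSpace ℝ E] {F : ℕ → α → E} {f : α → E}
    (hF_int : ∀ n, Integrable (F n) μ) (hF_sum : Summable fun n => ∫ a, ‖F n a‖ ∂μ)
    (hf : ∀ᵐ a ∂μ, HasSum (fun n => F n a) (f a)) :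
    HasSum (fun n => ∫ a, F n a ∂μ) (∫ a, f a ∂μ) := by
  rw [← integral_congr_ae (hf.mono fun a ha => ha.tsum_eq)]
  exact hasSum_integral_of_summable_integral_norm hF_int hF_sum

lemma summable_rpow_add_div_factorial_mul {s y : ℝ} (hs : 0 < s) (hy : 0 < y) :
    Summable fun n : ℕ => y ^ (s + n) / (n ! * (s + n)) := by
  refine ((Real.summable_pow_div_factorial y).mul_left (y ^ s / s)).of_nonneg_of_le
    (fun n => by positivity) fun n => ?_
  rw [Real.rpow_add hy, Real.rpow_natCast]
  calc y ^ s * y ^ n / (n ! * (s + n)) = y ^ s / (s + n) * (y ^ n / n !) := by field_simp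
    _ ≤ y ^ s / s * (y ^ n / n !) := by gcongr; exact le_add_of_nonneg_right n.cast_nonneg

lemma hasSum_lowerGamma {s y : ℝ} (hs : 0 < s) (hy : 0 < y) :
    HasSum (fun n : ℕ => (-1) ^ n * y ^ (s + n) / (n ! * (s + n))) (lowerGamma s y) := by
  set F : ℕ → ℝ → ℝ := fun n t => (-1) ^ n / n ! * t ^ (s - 1 + n) with hF
  have hsn (n : ℕ) : 0 < s + n := by positivity
  have hF_int (n : ℕ) : IntegrableOn (F n) (Ioc 0 y) :=
    ((intervalIntegrable_iff_integrableOn_Ioc_of_le hy.le).mp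
      (intervalIntegral.intervalIntegrable_rpow' (by linarith [hsn n]))).const_mul _
  have hF_integral (n : ℕ) :
      ∫ t in Ioc 0 y, F n t = (-1) ^ n * y ^ (s + n) / (n ! * (s + n)) := by
    rw [integral_const_mul, ← intervalIntegral.integral_of_le hy.le,
      integral_rpow (Or.inl (by linarith [hsn n])), Real.zero_rpow (by linarith [hsn n]),
      show s - 1 + n + 1 = s + n by ring, sub_zero]
    field_simp
  have hF_norm (n : ℕ) : ∫ t in Ioc 0 y, ‖F n t‖ = y ^ (s + n) / (n ! * (s + n)) := by
    rw [integral_norm_const_mul_of_nonneg _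
      ((ae_restrict_iff' measurableSet_Ioc).2 (ae_of_all _ fun t ht => Real.rpow_nonneg ht.1.le _)),
      hF_integral, norm_div, norm_mul, norm_mul, norm_pow, norm_neg, norm_one, one_pow, one_mul,
      Real.norm_of_nonneg (Real.rpow_nonneg hy.le _), Real.norm_natCast,
      Real.norm_of_nonneg (hsn n).le]
  have hsum : Summable fun n => ∫ t in Ioc 0 y, ‖F n t‖ := by
    simp_rw [hF_norm]
    exact summable_rpow_add_div_factorial_mul hs hy
  have hpt : ∀ t ∈ Ioc 0 y, HasSum (fun n => F n t) (t ^ (s - 1) * exp (-t)) := fun t ht => by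
    rw [Real.exp_eq_exp_ℝ]
    refine ((NormedSpace.expSeries_div_hasSum_exp (-t)).mul_left (t ^ (s - 1))).congr_fun
      fun n => ?_
    simp only [hF]
    rw [Real.rpow_add ht.1, Real.rpow_natCast, neg_pow]
    ring
  exact (hasSum_integral_of_hasSum_of_summable_integral_norm hF_int hsum
    ((ae_restrict_iff' measurableSet_Ioc).2 (ae_of_all _ hpt))).congr_fun
    fun n => (hF_integral n).symm

lemma hasSum_rpow_one_sub_mul_lowerGamma {s y : ℝ} (hs : 0 < s) (hy : 0 < y) :
    HasSum (fun n : ℕ => (-1) ^ n * y ^ (n + 1) / (n ! * (s + n)))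
      (y ^ (1 - s) * lowerGamma s y) := by
  refine ((hasSum_lowerGamma hs hy).mul_left (y ^ (1 - s))).congr_fun fun n => ?_
  have hpow : y ^ (1 - s) * y ^ (s + n) = y ^ (n + 1) := by
    rw [← Real.rpow_add hy, ← Real.rpow_natCast]
    push_cast
    ring_nf
  rw [← hpow]
  ring

lemma integrableOn_rpow_mul_exp_neg_mul {a r : ℝ} (ha : 0 < a) (hr : 0 < r) :
    IntegrableOn (fun x : ℝ => x ^ (a - 1) * exp (-(r * x))) (Ioi 0) := by
  simpa using integrableOn_rpow_mul_exp_neg_mul_rpow (by linarith : -1 < a - 1) one_pos hr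

lemma pow_mul_exp_neg_mul_mul_gammaPDFReal {a r z x : ℝ} (hx : 0 < x) (k : ℕ) :
    x ^ k * exp (-(z * x)) * gammaPDFReal a r x
      = r ^ a / Gamma a * (x ^ (a + k - 1) * exp (-((r + z) * x))) := by
  rw [gammaPDFReal, if_pos hx.le, add_sub_right_comm, Real.rpow_add hx, Real.rpow_natCast,
    add_mul, neg_add, Real.exp_add]
  ring

lemma integrableOn_pow_mul_exp_neg_mul_mul_gammaPDFReal {a r z : ℝ} (ha : 0 < a) (hrz : 0 < r + z)
    (k : ℕ) : IntegrableOn (fun x => x ^ k * exp (-(z * x)) * gammaPDFReal a r x) (Ioi 0) :=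
  IntegrableOn.congr_fun ((integrableOn_rpow_mul_exp_neg_mul (by positivity) hrz).const_mul _)
    (fun _ hx => (pow_mul_exp_neg_mul_mul_gammaPDFReal hx k).symm) measurableSet_Ioi

lemma integral_pow_mul_exp_neg_mul_mul_gammaPDFReal {a r z : ℝ} (ha : 0 < a) (hrz : 0 < r + z)
    (k : ℕ) :
    ∫ x in Ioi 0, x ^ k * exp (-(z * x)) * gammaPDFReal a r x
      = poch a k * r ^ a / (r + z) ^ (a + k) := by
  rw [setIntegral_congr_fun measurableSet_Ioi fun _ hx => pow_mul_exp_neg_mul_mul_gammaPDFReal hx k,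
    integral_const_mul, integral_rpow_mul_exp_neg_mul_Ioi (by positivity) hrz,
    Gamma_add_nat_eq_poch_mul ha, one_div, Real.inv_rpow hrz.le]
  field_simp

lemma integrableOn_pow_mul_gammaPDFReal {a r : ℝ} (ha : 0 < a) (hr : 0 < r) (k : ℕ) :
    IntegrableOn (fun x => x ^ k * gammaPDFReal a r x) (Ioi 0) := by
  simpa using integrableOn_pow_mul_exp_neg_mul_mul_gammaPDFReal ha (z := 0) (by simpa) k

lemma integral_pow_mul_gammaPDFReal {a r : ℝ} (ha : 0 < a) (hr : 0 < r) (k : ℕ) :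
    ∫ x in Ioi 0, x ^ k * gammaPDFReal a r x = poch a k / r ^ k := by
  have h := integral_pow_mul_exp_neg_mul_mul_gammaPDFReal ha (z := 0) (by simpa) k
  simp only [zero_mul, neg_zero, exp_zero, mul_one, add_zero] at h
  rw [h, Real.rpow_add hr, Real.rpow_natCast]
  field_simp

lemma integral_exp_neg_mul_mul_gammaPDFReal {a r z : ℝ} (ha : 0 < a) (hr : 0 < r)
    (hrz : 0 < r + z) :
    ∫ x in Ioi 0, exp (-(z * x)) * gammaPDFReal a r x = (1 + z / r) ^ (-a) := by
  have h := integral_pow_mul_exp_neg_mul_mul_gammaPDFReal ha hrz 0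
  simp only [pow_zero, one_mul, Nat.cast_zero, add_zero, poch] at h
  rw [h, one_add_div hr.ne', Real.rpow_neg (div_pos hrz hr).le, Real.div_rpow hrz.le hr.le,
    inv_div]

section LowerGammaGammaPDF

variable {a r s z : ℝ}

lemma hasSum_rpow_mul_lowerGamma_mul_gammaPDFReal (hs : 0 < s) (hz : 0 < z) {x : ℝ}
    (hx : 0 < x) :
    HasSum (fun n : ℕ => (-1) ^ n * z ^ (n + 1) / (n ! * (s + n)) *
        (x ^ (n + 1) * gammaPDFReal a r x))
      ((z * x) ^ (1 - s) * lowerGamma s (z * x) * gammaPDFReal a r x) := by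
  refine ((hasSum_rpow_one_sub_mul_lowerGamma hs (mul_pos hz hx)).mul_right
    (gammaPDFReal a r x)).congr_fun fun n => ?_
  rw [mul_pow]
  ring

lemma integral_lowerGamma_series_term (ha : 0 < a) (hr : 0 < r) (hs : 0 < s) (n : ℕ) :
    ∫ x in Ioi 0, (-1) ^ n * z ^ (n + 1) / (n ! * (s + n)) * (x ^ (n + 1) * gammaPDFReal a r x)
      = a * z / (r * s) * hyp2F1Term (a + 1) s (s + 1) (-(z / r)) n := by
  rw [integral_const_mul, integral_pow_mul_gammaPDFReal ha hr, hyp2F1Term, poch_succ_left,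
    mul_div_assoc (poch (a + 1) n), poch_div_poch_add_one hs, neg_div', div_pow, neg_pow]
  field_simp
  ring

lemma summable_integral_norm_lowerGamma_series_term (ha : 0 < a) (hr : 0 < r) (hs : 0 < s)
    (hz : 0 < z) (hzr : z < r) :
    Summable fun n : ℕ => ∫ x in Ioi 0,
      ‖(-1) ^ n * z ^ (n + 1) / (n ! * (s + n)) * (x ^ (n + 1) * gammaPDFReal a r x)‖ := by
  have hterm (n : ℕ) : ∫ x in Ioi 0,
      ‖(-1) ^ n * z ^ (n + 1) / (n ! * (s + n)) * (x ^ (n + 1) * gammaPDFReal a r x)‖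
        = ‖a * z / (r * s)‖ * ‖hyp2F1Term (a + 1) s (s + 1) (-(z / r)) n‖ := by
    rw [integral_norm_const_mul_of_nonneg _ ((ae_restrict_iff' measurableSet_Ioi).2
      (ae_of_all _ fun x hx => mul_nonneg (pow_nonneg (le_of_lt hx) _)
        (gammaPDFReal_nonneg ha hr x))), integral_lowerGamma_series_term ha hr hs, norm_mul]
  have hzr' : |-(z / r)| < 1 := by
    rwa [abs_neg, abs_of_pos (div_pos hz hr), div_lt_one hr]
  simp_rw [hterm]
  exact (summable_norm_hyp2F1Term (by linarith) hs (by linarith) hzr').mul_left _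

lemma integrableOn_rpow_mul_lowerGamma_mul_gammaPDFReal (ha : 0 < a) (hr : 0 < r) (hs : 0 < s)
    (hz : 0 < z) (hzr : z < r) :
    IntegrableOn (fun x => (z * x) ^ (1 - s) * lowerGamma s (z * x) * gammaPDFReal a r x)
      (Ioi 0) :=
  integrable_of_hasSum_of_summable_integral_norm
    (fun n => (integrableOn_pow_mul_gammaPDFReal ha hr (n + 1)).const_mul _)
    (summable_integral_norm_lowerGamma_series_term ha hr hs hz hzr)
    ((ae_restrict_iff' measurableSet_Ioi).2
      (ae_of_all _ fun _ hx => hasSum_rpow_mul_lowerGamma_mul_gammaPDFReal hs hz hx))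

lemma integral_rpow_mul_lowerGamma_mul_gammaPDFReal (ha : 0 < a) (hr : 0 < r) (hs : 0 < s)
    (hz : 0 < z) (hzr : z < r) :
    ∫ x in Ioi 0, (z * x) ^ (1 - s) * lowerGamma s (z * x) * gammaPDFReal a r x
      = a * z / (r * s) * hyp2F1 (a + 1) s (s + 1) (-(z / r)) := by
  rw [hyp2F1, ← tsum_mul_left]
  refine ((hasSum_integral_of_hasSum_of_summable_integral_norm
    (fun n => (integrableOn_pow_mul_gammaPDFReal ha hr (n + 1)).const_mul _)
    (summable_integral_norm_lowerGamma_series_term ha hr hs hz hzr)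
    ((ae_restrict_iff' measurableSet_Ioi).2
      (ae_of_all _ fun _ hx => hasSum_rpow_mul_lowerGamma_mul_gammaPDFReal hs hz hx))).congr_fun
    fun n => (integral_lowerGamma_series_term ha hr hs n).symm).tsum_eq.symm

end LowerGammaGammaPDF

theorem nakagami_W_general (m hbar : ℝ) (hm : 0 < m) (hhbar : 0 < hbar)
    (δ : ℝ) (hδ1 : δ < 1)
    (z : ℝ) (hz : 0 < z) (hconv : hbar * z < m) :
    (∫ x in Set.Ioi (0 : ℝ),
        ((z * x) ^ δ * lowerGamma (1 - δ) (z * x) - (1 - Real.exp (-(z * x)))) *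
          ((m / hbar) ^ m * x ^ (m - 1) * Real.exp (-(m * x / hbar)) / Real.Gamma m))
      = hbar * z / (1 - δ) * hyp2F1 (m + 1) (1 - δ) (2 - δ) (-(hbar * z) / m)
        - (1 - (1 + hbar * z / m) ^ (-m)) := by
  set s := 1 - δ with hs_def
  set r := m / hbar with hr_def
  have hs : 0 < s := by linarith
  have hr : 0 < r := div_pos hm hhbar
  have hzr : z < r := by rwa [lt_div_iff₀ hhbar, mul_comm]
  have hsplit : ∀ x ∈ Ioi (0 : ℝ),
      ((z * x) ^ δ * lowerGamma s (z * x) - (1 - exp (-(z * x)))) *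
          (r ^ m * x ^ (m - 1) * exp (-(m * x / hbar)) / Gamma m)
        = ((z * x) ^ (1 - s) * lowerGamma s (z * x) * gammaPDFReal m r x
          - gammaPDFReal m r x) + exp (-(z * x)) * gammaPDFReal m r x := fun x hx => by
    rw [gammaPDFReal, if_pos (le_of_lt hx), hs_def, sub_sub_cancel, mul_div_right_comm m x hbar]
    ring
  have hlowerGamma := integrableOn_rpow_mul_lowerGamma_mul_gammaPDFReal hm hr hs hz hzr
  have hdensity : IntegrableOn (gammaPDFReal m r) (Ioi 0) := by
    simpa using integrableOn_pow_mul_gammaPDFReal hm hr 0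
  have hlaplace : IntegrableOn (fun x => exp (-(z * x)) * gammaPDFReal m r x) (Ioi 0) := by
    simpa using integrableOn_pow_mul_exp_neg_mul_mul_gammaPDFReal hm (z := z) (by linarith) 0
  have htotal : ∫ x in Ioi 0, gammaPDFReal m r x = 1 := by
    simpa [poch] using integral_pow_mul_gammaPDFReal hm hr 0
  rw [setIntegral_congr_fun measurableSet_Ioi hsplit,
    integral_add (hlowerGamma.fun_sub hdensity) hlaplace, integral_sub hlowerGamma hdensity,
    integral_rpow_mul_lowerGamma_mul_gammaPDFReal hm hr hs hz hzr, htotal,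
    integral_exp_neg_mul_mul_gammaPDFReal hm hr (by linarith)]
  have hcoeff : m * z / (r * s) = hbar * z / s := by rw [hr_def]; field_simp
  have hratio : z / r = hbar * z / m := by rw [hr_def]; field_simp
  rw [hcoeff, hratio, neg_div, show s + 1 = 2 - δ by ring]
  ring

/-- Lemma 4 (Nakagami-m case): with `f_N` the Gamma density of shape `m` and mean `h̄`,
`∫₀^∞ ((zx)^δ γ(1−δ, zx) − (1 − e^(−zx))) f_N(x) dx
  = (h̄z/(1−δ)) ₂F₁(m+1, 1−δ; 2−δ; −h̄z/m) − (1 − (1 + h̄z/m)^(−m))`. -/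
theorem nakagami_W (m hbar : ℝ) (hm : 0 < m) (hhbar : 0 < hbar)
    (δ : ℝ) (hδ0 : 0 < δ) (hδ1 : δ < 1)
    (z : ℝ) (hz : 0 < z) (hconv : hbar * z < m) :
    (∫ x in Set.Ioi (0 : ℝ),
        ((z * x) ^ δ * lowerGamma (1 - δ) (z * x) - (1 - Real.exp (-(z * x)))) *
          ((m / hbar) ^ m * x ^ (m - 1) * Real.exp (-(m * x / hbar)) / Real.Gamma m))
      = hbar * z / (1 - δ) * hyp2F1 (m + 1) (1 - δ) (2 - δ) (-(hbar * z) / m)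
        - (1 - (1 + hbar * z / m) ^ (-m)) :=
  nakagami_W_general m hbar hm hhbar δ hδ1 z hz hconv
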